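/- arXiv:quant-ph/0510025 — 10 statements merged into one kernel-verified Lean document; each statement's English description precedes it below -/
import Mathlib

section
/- Let a11, a12, a21, a22 be complex numbers and define the (unnormalized) Bell-diagonal weights p_X := (1/4)(|a12 + a21|^2 + |a11 - a22|^2), p_Y := (1/4)((5·a12 - 3·a21)·conj(a12) + (-3·a12 + 5·a21)·conj(a21) + |a11 - a22|^2), and p_Z := (|a12|^2 + |a21|^2) + (1/2)|a11 - a22|^2. Then p_Y is a real number and the phase-error weight equals three-halves of the bit-error weight: p_Z + p_Y = (3/2)·(p_X + p_Y). -/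
/-!
Write `u = a12`, `v = a21`, `w = ‖a11 - a22‖²` and `r = Re (u v̄)`. The cross terms of `p_Y`
pair up as `-3 (v ū + u v̄) = -6 r`, so `p_Y = (5‖u‖² + 5‖v‖² - 6 r + w) / 4` is real, while
`p_X = (‖u‖² + ‖v‖² + 2 r + w) / 4`. In `3 p_X + p_Y` the `r` terms cancel, leaving
`2 (‖u‖² + ‖v‖²) + w = 2 p_Z`.
-/

open ComplexConjugate

namespace Complex

theorem mul_conj_add_mul_conj (u v : ℂ) : u * conj v + v * conj u = ((2 * (u * conj v).re : ℝ) : ℂ) := by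
  rw [← add_conj, map_mul, conj_conj, mul_comm (conj u)]

theorem mul_sub_mul_conj_add_neg_mul_add_mul_conj_eq_ofReal (a b : ℝ) (u v : ℂ) :
    ((a : ℂ) * u - b * v) * conj u + (-(b : ℂ) * u + a * v) * conj v
      = ((a * ‖u‖ ^ 2 + a * ‖v‖ ^ 2 - 2 * b * (u * conj v).re : ℝ) : ℂ) := by
  have hcross := mul_conj_add_mul_conj u v
  push_cast at hcross ⊢
  linear_combination a * mul_conj' u + a * mul_conj' v - (b : ℂ) * hcross

theorem sq_norm_add_eq (u v : ℂ) :
    ‖u + v‖ ^ 2 = ‖u‖ ^ 2 + ‖v‖ ^ 2 + 2 * (u * conj v).re := by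
  simp only [Complex.sq_norm, normSq_add]

end Complex

/-- Bell-basis diagonal weights of the (unnormalized) two-qubit state in one-photon
SARG04 after Eve applies `E = [[a11, a12], [a21, a22]]`: `p_Y` is real and
`p_Z + p_Y = (3/2) (p_X + p_Y)`. -/
theorem sarg04_one_photon_phase_eq_three_halves_bit
    (a11 a12 a21 a22 : ℂ)
    (pX : ℝ) (hpX : pX = (1 / 4) * ((‖a12 + a21‖) ^ 2 + (‖a11 - a22‖) ^ 2))
    (pY : ℂ) (hpY : pY = (1 / 4) * ((5 * a12 - 3 * a21) * (starRingEnd ℂ a12)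
      + (-3 * a12 + 5 * a21) * (starRingEnd ℂ a21) + ((‖a11 - a22‖) ^ 2 : ℂ)))
    (pZ : ℝ) (hpZ : pZ = ((‖a12‖) ^ 2 + (‖a21‖) ^ 2)
      + (1 / 2) * (‖a11 - a22‖) ^ 2) :
    pY.im = 0 ∧ (pZ : ℂ) + pY = (3 / 2) * ((pX : ℂ) + pY) := by
  obtain ⟨y, hy⟩ : ∃ y : ℝ,
      y = 1 / 4 * (5 * ‖a12‖ ^ 2 + 5 * ‖a21‖ ^ 2 - 6 * (a12 * conj a21).re + ‖a11 - a22‖ ^ 2) :=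
    ⟨_, rfl⟩
  have hY : pY = y := by
    have hform := Complex.mul_sub_mul_conj_add_neg_mul_add_mul_conj_eq_ofReal 5 3 a12 a21
    push_cast at hform
    rw [hpY, hform, hy]
    push_cast
    ring
  have hreal : pZ + y = 3 / 2 * (pX + y) := by
    rw [hpZ, hpX, hy, Complex.sq_norm_add_eq]
    ring
  refine ⟨by rw [hY]; exact Complex.ofReal_im y, ?_⟩
  rw [hY]
  simpa using congrArg ((↑) : ℝ → ℂ) hreal
end

section
/- Let a11, a12, a21, a22 be complex numbers and define p_X := (1/4)(|a12 + a21|^2 + |a11 - a22|^2) and p_Y := (1/4)((5·a12 - 3·a21)·conj(a12) + (-3·a12 + 5·a21)·conj(a21) + |a11 - a22|^2). Then p_Y = (p_X + p_Y)/2 + |a12 - a21|^2/2; in particular p_Y ≥ (p_X + p_Y)/2, i.e. the Y-error weight is at least half the bit-error weight. -/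
open ComplexConjugate

/-- The Hermitian form with circulant matrix `[[a, b], [b, a]]` is diagonalised by `u ± v`. -/
theorem Complex.two_mul_circulant_form_eq (a b u v : ℂ) :
    2 * ((a * u + b * v) * conj u + (b * u + a * v) * conj v) =
      (a + b) * (‖u + v‖ ^ 2 : ℂ) + (a - b) * (‖u - v‖ ^ 2 : ℂ) := by
  simp only [← Complex.mul_conj', map_add, map_sub]
  ring

/-- In one-photon SARG04, the Y-error weight satisfies
`p_Y = (p_X + p_Y)/2 + |a12 - a21|²/2`, hence is at least half the bit-error weight. -/
theorem sarg04_one_photon_pY_ge_half_bit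
    (a11 a12 a21 a22 : ℂ)
    (pX : ℝ) (hpX : pX = (1 / 4) * (‖a12 + a21‖ ^ 2 + ‖a11 - a22‖ ^ 2))
    (pY : ℂ) (hpY : pY = (1 / 4) * ((5 * a12 - 3 * a21) * (starRingEnd ℂ a12)
      + (-3 * a12 + 5 * a21) * (starRingEnd ℂ a21) + (‖a11 - a22‖ ^ 2 : ℂ))) :
    pY = ((pX : ℂ) + pY) / 2 + (‖a12 - a21‖ ^ 2 : ℂ) / 2 ∧
      (pX + pY.re) / 2 ≤ pY.re := by
  have hpX' : (pX : ℂ) = (1 / 4) * ((‖a12 + a21‖ ^ 2 : ℂ) + (‖a11 - a22‖ ^ 2 : ℂ)) := by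
    rw [hpX]; push_cast; ring
  -- The `(5, -3)` circulant form equals `‖a12 + a21‖² + 4 ‖a12 - a21‖²`.
  have hY : pY = pX + (‖a12 - a21‖ ^ 2 : ℂ) := by
    linear_combination hpY - hpX' + (1 / 8) * Complex.two_mul_circulant_form_eq 5 (-3) a12 a21
  have hY_re : pY.re = pX + ‖a12 - a21‖ ^ 2 := by
    simpa [← Complex.ofReal_pow] using congrArg Complex.re hY
  refine ⟨by linear_combination hY / 2, ?_⟩
  linarith [sq_nonneg ‖a12 - a21‖]
end

section
/- Define g : ℝ → ℝ by g(x) = (1/6)·(3 - 2x + √(6 - 6√2·x + 4x²)) (the radicand 6 - 6√2·x + 4x² is positive for all real x). Then for every real e with 0 ≤ e ≤ 1/3, the infimum over all real x of x·e + g(x) equals 1/2 - (1 - 3e)/(2√2) + √((1 - (1 - 3e)²)/24). -/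
/-!
Write `t = 1 - 3e` and `u = 2x - 3/√2`. Completing the square, the radicand of `g` is
`u² + 3/2`, and `x e + g x = 1/2 - t/(2√2) + (√(u² + c²) - t u)/6` with `c = √(3/2)`.
By Cauchy–Schwarz, `t u + c √(1 - t²) ≤ √(t² + (1 - t²)) √(u² + c²) = √(u² + c²)`, with equality
at `u = c t / √(1 - t²)` when `t < 1`; for `t = 1` (i.e. `e = 0`) the infimum `0` of
`√(u² + c²) - u` is only approached as `u → ∞`.
-/

open Real Set

section SqrtSubMul

variable {c t : ℝ}

lemma mul_sqrt_one_sub_sq_le_sqrt_sub_mul (ht : t ^ 2 ≤ 1) (u : ℝ) :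
    c * √(1 - t ^ 2) ≤ √(u ^ 2 + c ^ 2) - t * u := by
  have hs : √(1 - t ^ 2) ^ 2 = 1 - t ^ 2 := sq_sqrt (by linarith)
  have cauchy_schwarz : (t * u + c * √(1 - t ^ 2)) ^ 2 ≤ u ^ 2 + c ^ 2 := by
    nlinarith [sq_nonneg (t * c - √(1 - t ^ 2) * u)]
  linarith [(le_abs_self _).trans (abs_le_sqrt cauchy_schwarz)]

lemma isLeast_range_sqrt_sub_mul (hc : 0 ≤ c) (ht : t ^ 2 < 1) :
    IsLeast (range fun u => √(u ^ 2 + c ^ 2) - t * u) (c * √(1 - t ^ 2)) := by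
  refine ⟨⟨c * t / √(1 - t ^ 2), ?_⟩, ?_⟩
  · have hs : 0 < √(1 - t ^ 2) := sqrt_pos.2 (by linarith)
    have hs2 : √(1 - t ^ 2) ^ 2 = 1 - t ^ 2 := sq_sqrt (by linarith)
    have hsqrt : √((c * t / √(1 - t ^ 2)) ^ 2 + c ^ 2) = c / √(1 - t ^ 2) := by
      rw [sqrt_eq_iff_eq_sq (by positivity) (by positivity)]
      field_simp
      linear_combination c ^ 2 * hs2
    simp only [hsqrt]
    field_simp
    linear_combination -c * hs2
  · rintro _ ⟨u, rfl⟩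
    exact mul_sqrt_one_sub_sq_le_sqrt_sub_mul ht.le u

lemma isGLB_range_sqrt_sub_mul_of_sq_eq_one (ht : t ^ 2 = 1) :
    IsGLB (range fun u => √(u ^ 2 + c ^ 2) - t * u) 0 := by
  refine ⟨?_, fun b hb => ?_⟩
  · rintro _ ⟨u, rfl⟩
    simpa [ht] using mul_sqrt_one_sub_sq_le_sqrt_sub_mul (c := c) ht.le u
  by_contra! hb0
  -- along `u = t v` the function is `√(v² + c²) - v`, which is below `b` once `2 v b ≥ c²`
  obtain ⟨v, hv⟩ : ∃ v, 2 * v * b = c ^ 2 := ⟨c ^ 2 / (2 * b), by field_simp⟩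
  have htv : t * (t * v) = v := by rw [← mul_assoc, ← sq, ht, one_mul]
  have hlt : √((t * v) ^ 2 + c ^ 2) < v + b := by
    rw [sqrt_lt' (by nlinarith [sq_nonneg c]), mul_pow, ht]
    nlinarith
  have := hb ⟨t * v, rfl⟩
  simp only [htv] at this
  linarith

lemma isGLB_range_sqrt_sub_mul (hc : 0 ≤ c) (ht : t ^ 2 ≤ 1) :
    IsGLB (range fun u => √(u ^ 2 + c ^ 2) - t * u) (c * √(1 - t ^ 2)) := by
  rcases ht.lt_or_eq with ht | ht
  · exact (isLeast_range_sqrt_sub_mul hc ht).isGLB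
  · simpa [ht] using isGLB_range_sqrt_sub_mul_of_sq_eq_one (c := c) ht

end SqrtSubMul

lemma sarg04_radicand_eq (x : ℝ) :
    6 - 6 * √2 * x + 4 * x ^ 2 = (2 * x - 3 * √2 / 2) ^ 2 + √(3 / 2) ^ 2 := by
  rw [sq_sqrt (by norm_num)]
  linear_combination (-9 / 4) * sq_sqrt (show (0 : ℝ) ≤ 2 by norm_num)

lemma sarg04_bound_eq (x t : ℝ) :
    x * ((1 - t) / 3) + 1 / 6 * (3 - 2 * x + √(6 - 6 * √2 * x + 4 * x ^ 2))
      = 1 / 2 - t / (2 * √2)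
        + (√((2 * x - 3 * √2 / 2) ^ 2 + √(3 / 2) ^ 2) - t * (2 * x - 3 * √2 / 2)) / 6 := by
  rw [sarg04_radicand_eq]
  field_simp
  linear_combination (-9 * t) * sq_sqrt (show (0 : ℝ) ≤ 2 by norm_num)

lemma sarg04_min_eq (t : ℝ) :
    1 / 2 - t / (2 * √2) + √(3 / 2) * √(1 - t ^ 2) / 6
      = 1 / 2 - t / (2 * √2) + √((1 - t ^ 2) / 24) := by
  rw [← sqrt_mul (by norm_num), show (1 - t ^ 2) / 24 = 3 / 2 * (1 - t ^ 2) / 6 ^ 2 by ring,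
    sqrt_div' _ (by positivity), sqrt_sq (by norm_num)]

/-- For `g(x) = (1/6)(3 - 2x + √(6 - 6√2 x + 4x²))` (with positive radicand), and any
bit error rate `e ∈ [0, 1/3]`, the infimum over `x` of `x e + g(x)` equals
`1/2 - (1 - 3e)/(2√2) + √((1 - (1 - 3e)²)/24)`. -/
theorem sarg04_two_photon_worst_phase_error
    (g : ℝ → ℝ)
    (hg : ∀ x : ℝ, g x = (1 / 6) * (3 - 2 * x + Real.sqrt (6 - 6 * Real.sqrt 2 * x + 4 * x ^ 2)))
    (e : ℝ) (he0 : 0 ≤ e) (he1 : e ≤ 1 / 3) :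
    (∀ x : ℝ, 0 < 6 - 6 * Real.sqrt 2 * x + 4 * x ^ 2) ∧
      sInf (Set.range fun x : ℝ => x * e + g x)
        = 1 / 2 - (1 - 3 * e) / (2 * Real.sqrt 2) + Real.sqrt ((1 - (1 - 3 * e) ^ 2) / 24) := by
  refine ⟨fun x => by rw [sarg04_radicand_eq]; positivity, ?_⟩
  set t := 1 - 3 * e
  have he : e = (1 - t) / 3 := by ring
  have hf : ∀ x, x * e + g x = 1 / 2 - t / (2 * √2)
      + (√((2 * x - 3 * √2 / 2) ^ 2 + √(3 / 2) ^ 2) - t * (2 * x - 3 * √2 / 2)) / 6 := by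
    intro x
    rw [hg, he, sarg04_bound_eq]
  have hglb := isGLB_range_sqrt_sub_mul (sqrt_nonneg (3 / 2)) (t := t) (by nlinarith)
  rw [← sarg04_min_eq]
  refine IsGLB.csInf_eq ⟨?_, fun b hb => ?_⟩ (range_nonempty _)
  · rintro _ ⟨x, rfl⟩
    have := hglb.1 ⟨2 * x - 3 * √2 / 2, rfl⟩
    simp only [hf]
    linarith
  · by_contra! hlt
    obtain ⟨_, ⟨u, rfl⟩, -, hu⟩ :=
      hglb.exists_between (b := 6 * (b - (1 / 2 - t / (2 * √2)))) (by linarith)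
    have := hb ⟨(u + 3 * √2 / 2) / 2, rfl⟩
    simp only [hf, show 2 * ((u + 3 * √2 / 2) / 2) - 3 * √2 / 2 = u by ring] at this
    linarith
end

section
/- Let p_X, p_Y, p_Z be real numbers and set p_I := 1 - p_X - p_Y - p_Z. Define the P-step outputs p_X' = 3p_I²(p_X + p_Y) + 6p_I·p_X·p_Z + 3p_X²·p_Y + p_X³, p_Y' = 6p_I·p_Y·p_Z + 3p_X(p_Y² + p_Z²) + 3p_Y·p_Z² + p_Y³, p_Z' = 3p_I(p_Y² + p_Z²) + 6p_X·p_Y·p_Z + 3p_Y²·p_Z + p_Z³. With the change of variables t_Z = p_X + p_Y, t_X = p_Y + p_Z, Δ = p_Z - p_Y (and primed versions defined from the primed probabilities), one has: t_Z' = 3t_Z(1 - t_Z)² + t_Z³, t_X' = 3t_X²(1 - t_X) + t_X³, and Δ' = 3Δ²(1 - 2t_Z - Δ) + Δ³. -/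
/-- Change of variables for a P step of the Gottesman–Lo two-way postprocessing. -/
theorem P_step_change_of_variables
    (pX pY pZ : ℝ)
    (pI : ℝ) (hpI : pI = 1 - pX - pY - pZ)
    (pX' pY' pZ' : ℝ)
    (hX' : pX' = 3 * pI ^ 2 * (pX + pY) + 6 * pI * pX * pZ + 3 * pX ^ 2 * pY + pX ^ 3)
    (hY' : pY' = 6 * pI * pY * pZ + 3 * pX * (pY ^ 2 + pZ ^ 2) + 3 * pY * pZ ^ 2 + pY ^ 3)
    (hZ' : pZ' = 3 * pI * (pY ^ 2 + pZ ^ 2) + 6 * pX * pY * pZ + 3 * pY ^ 2 * pZ + pZ ^ 3)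
    (tZ tX Δ : ℝ) (htZ : tZ = pX + pY) (htX : tX = pY + pZ) (hΔ : Δ = pZ - pY)
    (tZ' tX' Δ' : ℝ) (htZ' : tZ' = pX' + pY') (htX' : tX' = pY' + pZ') (hΔ' : Δ' = pZ' - pY') :
    tZ' = 3 * tZ * (1 - tZ) ^ 2 + tZ ^ 3 ∧
      tX' = 3 * tX ^ 2 * (1 - tX) + tX ^ 3 ∧
      Δ' = 3 * Δ ^ 2 * (1 - 2 * tZ - Δ) + Δ ^ 3 := by
  subst_vars; refine ⟨by ring, by ring, by ring⟩
end

section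
/- Let t_Z, t_Xα, t_Xβ, Δα, Δβ be real numbers with 0 ≤ t_Xβ ≤ t_Xα ≤ 1/2, Δβ ≤ Δα, and 1 - 2t_Z - 2Δα ≥ 0, and set p_S := 1 - 2t_Z + 2t_Z² (note p_S ≥ 1/2 > 0). Define the B-step images t_X' = [t_X - t_X² + Δ(1 - 2t_Z - Δ)]/p_S and Δ' = [t_X(1 - 2t_Z) + Δ(1 - 2t_X)]/p_S for each of the two triples (t_Z, t_Xα, Δα) and (t_Z, t_Xβ, Δβ). Then the dominance relations are preserved: t_Xβ' ≤ t_Xα' and Δβ' ≤ Δα'. -/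
/-- A B step preserves the dominance relations `t_Xβ ≤ t_Xα` and `Δβ ≤ Δα`. -/
theorem B_step_preserves_dominance
    (tZ tXα tXβ Δα Δβ : ℝ)
    (hβ0 : 0 ≤ tXβ) (hβα : tXβ ≤ tXα) (hα : tXα ≤ 1 / 2)
    (hΔ : Δβ ≤ Δα) (hinv : 1 - 2 * tZ - 2 * Δα ≥ 0)
    (pS : ℝ) (hpS : pS = 1 - 2 * tZ + 2 * tZ ^ 2)
    (tXα' Δα' tXβ' Δβ' : ℝ)
    (hXα' : tXα' = (tXα - tXα ^ 2 + Δα * (1 - 2 * tZ - Δα)) / pS)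
    (hΔα' : Δα' = (tXα * (1 - 2 * tZ) + Δα * (1 - 2 * tXα)) / pS)
    (hXβ' : tXβ' = (tXβ - tXβ ^ 2 + Δβ * (1 - 2 * tZ - Δβ)) / pS)
    (hΔβ' : Δβ' = (tXβ * (1 - 2 * tZ) + Δβ * (1 - 2 * tXβ)) / pS) :
    tXβ' ≤ tXα' ∧ Δβ' ≤ Δα' := by
  have hpS0 : 0 < pS := by nlinarith [sq_nonneg (2 * tZ - 1)]
  subst hXα' hΔα' hXβ' hΔβ'
  constructor
  · apply div_le_div_of_nonneg_right ?_ hpS0.le |>.trans_eq rfl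
    nlinarith [mul_nonneg (sub_nonneg.2 hβα) (by nlinarith : (0:ℝ) ≤ 1 - tXα - tXβ),
      mul_nonneg (sub_nonneg.2 hΔ) (by nlinarith : (0:ℝ) ≤ 1 - 2 * tZ - Δα - Δβ)]
  · apply div_le_div_of_nonneg_right ?_ hpS0.le |>.trans_eq rfl
    nlinarith [mul_nonneg (sub_nonneg.2 hβα) hinv.le,
      mul_nonneg (sub_nonneg.2 hΔ) (by nlinarith : (0:ℝ) ≤ 1 - 2 * tXβ)]
end

section
/- Let ξ, e, a be real numbers with ξ ≥ 1, 0 ≤ a ≤ e, and 0 ≤ 2ξe ≤ 1. (i) Initial B step: ξe(1 - 2e) + (ξe - 2a)(1 - 2ξe) ≥ 0; consequently, for the initial state t_Z = e, t_X = ξe, Δ = ξe - 2a, the B-step image Δ' = [t_X(1 - 2t_Z) + Δ(1 - 2t_X)]/p_S is nonnegative (p_S = 1 - 2t_Z + 2t_Z² > 0). (ii) Preservation: for any reals with 0 ≤ t_Z ≤ 1/2, 0 ≤ t_X ≤ 1/2 and Δ ≥ 0, the B-step image Δ' = [t_X(1 - 2t_Z) + Δ(1 - 2t_X)]/p_S is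 nonnegative; and if moreover Δ ≤ 1 - 2t_Z, the P-step image Δ' = 3Δ²(1 - 2t_Z - Δ) + Δ³ is nonnegative. -/
/-- Nonnegativity of `Δ` after the initial B step for SARG04, and its preservation
under subsequent B and P steps. -/
theorem sarg04_delta_nonneg
    (ξ e a : ℝ) (hξ : 1 ≤ ξ) (ha0 : 0 ≤ a) (hae : a ≤ e)
    (h2ξe0 : 0 ≤ 2 * ξ * e) (h2ξe1 : 2 * ξ * e ≤ 1) :
    -- (i) initial B step
    (ξ * e * (1 - 2 * e) + (ξ * e - 2 * a) * (1 - 2 * ξ * e) ≥ 0 ∧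
      ((ξ * e) * (1 - 2 * e) + (ξ * e - 2 * a) * (1 - 2 * (ξ * e)))
          / (1 - 2 * e + 2 * e ^ 2) ≥ 0) ∧
    -- (ii) preservation under B and P steps
    (∀ tZ tX Δ : ℝ, 0 ≤ tZ → tZ ≤ 1 / 2 → 0 ≤ tX → tX ≤ 1 / 2 → 0 ≤ Δ →
      (tX * (1 - 2 * tZ) + Δ * (1 - 2 * tX)) / (1 - 2 * tZ + 2 * tZ ^ 2) ≥ 0 ∧
        (Δ ≤ 1 - 2 * tZ → 3 * Δ ^ 2 * (1 - 2 * tZ - Δ) + Δ ^ 3 ≥ 0)) := by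
  have he0 : 0 ≤ e := by nlinarith
  have hnum : ξ * e * (1 - 2 * e) + (ξ * e - 2 * a) * (1 - 2 * ξ * e) ≥ 0 := by
    nlinarith [mul_nonneg he0 (sub_nonneg.mpr hξ), mul_nonneg (mul_nonneg he0 (sub_nonneg.mpr hξ)) h2ξe0, mul_nonneg (sub_nonneg.mpr hae) (sub_nonneg.mpr h2ξe1)]
  refine ⟨⟨hnum, ?_⟩, ?_⟩
  · apply div_nonneg
    · linarith [hnum]
    · nlinarith [sq_nonneg (1 - 2 * e)]
  · intro tZ tX Δ h1 h2 h3 h4 h5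
    constructor
    · apply div_nonneg
      · nlinarith
      · nlinarith [sq_nonneg (1 - 2 * tZ)]
    · intro h6
      nlinarith [sq_nonneg Δ, pow_nonneg h5 3]
end

section
/- Let t_Z, t_X, Δ be real numbers and p_S := 1 - 2t_Z + 2t_Z² (so p_S ≥ 1/2 > 0). For the B-step images t_Z' = t_Z²/p_S and Δ' = [t_X(1 - 2t_Z) + Δ(1 - 2t_X)]/p_S, the identity 1 - 2t_Z' - 2Δ' = (1 - 2t_Z - 2Δ)(1 - 2t_X)/p_S holds. Consequently, if 1 - 2t_Z - 2Δ ≥ 0 and t_X ≤ 1/2, then 1 - 2t_Z' - 2Δ' ≥ 0. -/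
/-- The B step transforms the invariant `1 - 2t_Z - 2Δ` multiplicatively:
`1 - 2t_Z' - 2Δ' = (1 - 2t_Z - 2Δ)(1 - 2t_X)/p_S`, hence it stays nonnegative. -/
theorem B_step_invariant
    (tZ tX Δ : ℝ) (pS : ℝ) (hpS : pS = 1 - 2 * tZ + 2 * tZ ^ 2)
    (tZ' Δ' : ℝ) (htZ' : tZ' = tZ ^ 2 / pS)
    (hΔ' : Δ' = (tX * (1 - 2 * tZ) + Δ * (1 - 2 * tX)) / pS) :
    1 - 2 * tZ' - 2 * Δ' = (1 - 2 * tZ - 2 * Δ) * (1 - 2 * tX) / pS ∧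
      (1 - 2 * tZ - 2 * Δ ≥ 0 → tX ≤ 1 / 2 → 1 - 2 * tZ' - 2 * Δ' ≥ 0) := by
  have hpos : 0 < pS := by nlinarith [sq_nonneg (2 * tZ - 1)]
  have hne : pS ≠ 0 := ne_of_gt hpos
  have heq : 1 - 2 * tZ' - 2 * Δ' = (1 - 2 * tZ - 2 * Δ) * (1 - 2 * tX) / pS := by
    subst htZ' hΔ'
    field_simp
    ring_nf
    nlinarith [hpS]
  refine ⟨heq, fun h1 h2 => ?_⟩
  rw [heq]
  apply div_nonneg _ hpos.le
  nlinarith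
end

section
/- Let t_Z and Δ be real numbers, and define the P-step images t_Z' = 3t_Z(1 - t_Z)² + t_Z³ and Δ' = 3Δ²(1 - 2t_Z - Δ) + Δ³. Then the identities 1 - 2t_Z' = (1 - 2t_Z)³ and 1 - 2t_Z' - 2Δ' = (1 - 2t_Z - 2Δ)·[(1 - 2t_Z)² + 2Δ(1 - 2t_Z - Δ)] hold. Consequently, if Δ ≥ 0 and 1 - 2t_Z - 2Δ ≥ 0, then 1 - 2t_Z' - 2Δ' ≥ 0. -/
/-- The P step transforms the invariant `1 - 2t_Z - 2Δ` as
`1 - 2t_Z' - 2Δ' = (1 - 2t_Z - 2Δ)[(1 - 2t_Z)² + 2Δ(1 - 2t_Z - Δ)]`,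
with `1 - 2t_Z' = (1 - 2t_Z)³`; hence it stays nonnegative when `Δ ≥ 0`. -/
theorem P_step_invariant
    (tZ Δ : ℝ) (tZ' Δ' : ℝ)
    (htZ' : tZ' = 3 * tZ * (1 - tZ) ^ 2 + tZ ^ 3)
    (hΔ' : Δ' = 3 * Δ ^ 2 * (1 - 2 * tZ - Δ) + Δ ^ 3) :
    1 - 2 * tZ' = (1 - 2 * tZ) ^ 3 ∧
      1 - 2 * tZ' - 2 * Δ'
        = (1 - 2 * tZ - 2 * Δ) * ((1 - 2 * tZ) ^ 2 + 2 * Δ * (1 - 2 * tZ - Δ)) ∧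
      (0 ≤ Δ → 1 - 2 * tZ - 2 * Δ ≥ 0 → 1 - 2 * tZ' - 2 * Δ' ≥ 0) := by
  subst htZ' hΔ'
  refine ⟨by ring, by ring, fun hΔ hinv => ?_⟩
  have key : 1 - 2 * (3 * tZ * (1 - tZ) ^ 2 + tZ ^ 3)
      - 2 * (3 * Δ ^ 2 * (1 - 2 * tZ - Δ) + Δ ^ 3)
      = (1 - 2 * tZ - 2 * Δ) * ((1 - 2 * tZ) ^ 2 + 2 * Δ * (1 - 2 * tZ - Δ)) := by ring
  rw [ge_iff_le, key]
  have h1 : 0 ≤ 1 - 2 * tZ - Δ := by linarith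
  positivity
end

section
/- Let L₀ := (1/2)P(φ₁) + P(φ₂) + (1/2)P(φ₃) and B₀ := (1/2)P(φ₀) + P(φ₁) + (3/2)P(φ₂) + P(φ₃), both 2×2 Hermitian matrices. Then L₀ - (1/3)B₀ and (3/5)B₀ - L₀ are both positive semidefinite, and both bounds are attained: there exist nonzero vectors u, v ∈ ℂ² with ⟨u, L₀u⟩ = (1/3)⟨u, B₀u⟩ and ⟨v, L₀v⟩ = (3/5)⟨v, B₀v⟩. (Equivalently, the eigenvalues of B₀^{-1/2} L₀ B₀^{-1/2} are exactly 1/3 and 3/5.) -/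
open Matrix Real
open scoped ComplexOrder

noncomputable section

/-- Standard basis vector `e₀` of `ℂ²`. -/
def e0 : Fin 2 → ℂ := ![1, 0]
/-- Standard basis vector `e₁` of `ℂ²`. -/
def e1 : Fin 2 → ℂ := ![0, 1]

/-- `P(v) = v v†`, the rank-one matrix associated with `v ∈ ℂ²`. -/
def P (v : Fin 2 → ℂ) : Matrix (Fin 2) (Fin 2) ℂ := vecMulVec v (star v)

/-- The rotation `R = cos(π/4)·I + sin(π/4)·(e₁e₀† - e₀e₁†)`. -/
def Rrot : Matrix (Fin 2) (Fin 2) ℂ :=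
  (Real.cos (π / 4) : ℂ) • 1 +
    (Real.sin (π / 4) : ℂ) • (vecMulVec e1 (star e0) - vecMulVec e0 (star e1))

/-- The SARG04 states `φ_m = R^{-m} φ₀` with `φ₀ = cos(π/8) e₀ + sin(π/8) e₁`,
indices effectively taken modulo 4. -/
def φ (m : ℤ) : Fin 2 → ℂ :=
  (Rrot ^ (-m)).mulVec ((Real.cos (π / 8) : ℂ) • e0 + (Real.sin (π / 8) : ℂ) • e1)
/-- The matrix `L₀` for the single-photon SARG04 intercept-and-resend analysis. -/
def L0 : Matrix (Fin 2) (Fin 2) ℂ :=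
  ((1 : ℂ) / 2) • P (φ 1) + P (φ 2) + ((1 : ℂ) / 2) • P (φ 3)

/-- The matrix `B₀` for the single-photon SARG04 intercept-and-resend analysis. -/
def B0 : Matrix (Fin 2) (Fin 2) ℂ :=
  ((1 : ℂ) / 2) • P (φ 0) + P (φ 1) + ((3 : ℂ) / 2) • P (φ 2) + P (φ 3)

/-! The states `φ₀, φ₂` are real and orthonormal, and `φ₁, φ₃` are their images under the
unitary `R⁻¹ = Rᴴ`, so both pairs are orthonormal bases: `P(φ₀) + P(φ₂) = 1 = P(φ₁) + P(φ₃)`.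
Modulo this single relation `L₀ - B₀/3 = (2/3) P(φ₂)` and `(3/5) B₀ - L₀ = (2/5) P(φ₀)`,
which are positive semidefinite of rank one, with kernels spanned by `φ₀` and `φ₂`. -/

lemma Rrot_eq : Rrot = ((√2 / 2 : ℝ) : ℂ) • !![1, -1; 1, 1] := by
  ext i j
  fin_cases i <;> fin_cases j <;>
    simp [Rrot, e0, e1, vecMulVec, one_apply, cos_pi_div_four, sin_pi_div_four]

lemma ofReal_sqrt_two_div_two_sq : ((√2 / 2 : ℝ) : ℂ) ^ 2 = 1 / 2 := by
  norm_cast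
  rw [div_pow, sq_sqrt zero_le_two]
  norm_num

lemma Rrot_sq : Rrot ^ 2 = !![0, -1; 1, 0] := by
  rw [Rrot_eq, smul_pow, ofReal_sqrt_two_div_two_sq]
  ext i j
  fin_cases i <;> fin_cases j <;> simp [sq] <;> norm_num

lemma conjTranspose_Rrot_mul_Rrot : Rrotᴴ * Rrot = 1 := by
  rw [Rrot_eq, conjTranspose_smul, smul_mul_smul_comm, Complex.star_def, Complex.conj_ofReal,
    ← sq, ofReal_sqrt_two_div_two_sq]
  ext i j
  fin_cases i <;> fin_cases j <;>
    simp [mul_apply, Fin.sum_univ_two, conjTranspose_apply] <;> norm_num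

lemma Rrot_inv : Rrot⁻¹ = Rrotᴴ := inv_eq_left_inv conjTranspose_Rrot_mul_Rrot

lemma φ_add_one (m : ℤ) : φ (m + 1) = Rrotᴴ *ᵥ φ m := by
  rw [φ, φ, neg_add_rev, zpow_add (isUnit_det_of_left_inverse conjTranspose_Rrot_mul_Rrot),
    Matrix.zpow_neg_one, Rrot_inv, mulVec_mulVec]

lemma φ_zero : φ 0 = ![(cos (π / 8) : ℂ), sin (π / 8)] := by
  ext i
  fin_cases i <;> simp [φ, e0, e1]

lemma φ_two : φ 2 = ![(sin (π / 8) : ℂ), -cos (π / 8)] := by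
  rw [show (2 : ℤ) = 0 + 1 + 1 by norm_num, φ_add_one, φ_add_one, mulVec_mulVec,
    ← conjTranspose_mul, ← sq, Rrot_sq, φ_zero]
  ext i
  fin_cases i <;> simp [mulVec, dotProduct, Fin.sum_univ_two]

lemma star_φ_two_dotProduct_φ_zero : star (φ 2) ⬝ᵥ φ 0 = 0 := by
  simp [φ_zero, φ_two, dotProduct, Complex.conj_ofReal, -Complex.ofReal_cos, -Complex.ofReal_sin,
    -cos_pi_div_eight, -sin_pi_div_eight]
  ring

lemma P_mulVec (A : Matrix (Fin 2) (Fin 2) ℂ) (v : Fin 2 → ℂ) :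
    P (A *ᵥ v) = A * P v * Aᴴ := by
  rw [P, P, star_mulVec, ← mul_vecMulVec, Matrix.mul_assoc, vecMulVec_mul]

lemma P_add_P_of_real (a b : ℝ) :
    P ![(a : ℂ), b] + P ![(b : ℂ), -a] = ((a ^ 2 + b ^ 2 : ℝ) : ℂ) • 1 := by
  ext i j
  fin_cases i <;> fin_cases j <;> simp [P, vecMulVec, Complex.conj_ofReal] <;> ring

lemma P_φ_zero_add_P_φ_two : P (φ 0) + P (φ 2) = 1 := by
  rw [φ_zero, φ_two, P_add_P_of_real, cos_sq_add_sin_sq, Complex.ofReal_one, one_smul]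

lemma P_φ_one_add_P_φ_three : P (φ 1) + P (φ 3) = 1 := by
  rw [show (1 : ℤ) = 0 + 1 by norm_num, show (3 : ℤ) = 2 + 1 by norm_num, φ_add_one, φ_add_one,
    P_mulVec, P_mulVec, ← add_mul, ← mul_add, P_φ_zero_add_P_φ_two, mul_one,
    conjTranspose_conjTranspose, conjTranspose_Rrot_mul_Rrot]

lemma L0_sub_smul_B0 : L0 - (1 / 3 : ℂ) • B0 = (2 / 3 : ℂ) • P (φ 2) := by
  rw [L0, B0]
  linear_combination (norm := module)
    (-1 / 6 : ℂ) • (P_φ_zero_add_P_φ_two - P_φ_one_add_P_φ_three)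

lemma smul_B0_sub_L0 : (3 / 5 : ℂ) • B0 - L0 = (2 / 5 : ℂ) • P (φ 0) := by
  rw [L0, B0]
  linear_combination (norm := module)
    (-1 / 10 : ℂ) • (P_φ_zero_add_P_φ_two - P_φ_one_add_P_φ_three)

lemma star_dotProduct_P_mulVec_of_orthogonal {v w : Fin 2 → ℂ} (h : star v ⬝ᵥ w = 0) :
    star w ⬝ᵥ P v *ᵥ w = 0 := by
  rw [P, vecMulVec_mulVec, h]
  simp

lemma star_dotProduct_mulVec_eq_of_sub_eq {M N : Matrix (Fin 2) (Fin 2) ℂ} {a b : ℂ}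
    {v w : Fin 2 → ℂ} (h : M - a • N = b • P v) (hvw : star v ⬝ᵥ w = 0) :
    star w ⬝ᵥ M *ᵥ w = a * (star w ⬝ᵥ N *ᵥ w) := by
  have hw := congrArg (fun A => star w ⬝ᵥ A *ᵥ w) h
  simp only [sub_mulVec, smul_mulVec, dotProduct_sub, dotProduct_smul, smul_eq_mul,
    star_dotProduct_P_mulVec_of_orthogonal hvw, mul_zero] at hw
  exact sub_eq_zero.mp hw

lemma ofReal_cos_pi_div_eight_ne_zero : (cos (π / 8) : ℂ) ≠ 0 := by
  exact_mod_cast (cos_pos_of_mem_Ioo ⟨by linarith [pi_pos], by linarith [pi_pos]⟩).ne'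

lemma φ_zero_ne_zero : φ 0 ≠ 0 := fun h ↦
  ofReal_cos_pi_div_eight_ne_zero (by simpa [φ_zero] using congrFun h 0)

lemma φ_two_ne_zero : φ 2 ≠ 0 := fun h ↦
  ofReal_cos_pi_div_eight_ne_zero (by simpa [φ_two] using congrFun h 1)

/-- The generalized eigenvalues of the pencil `(L₀, B₀)` are exactly `1/3` and `3/5`:
both `L₀ - (1/3)B₀` and `(3/5)B₀ - L₀` are positive semidefinite, and both bounds
are attained by nonzero vectors. -/
theorem sarg04_single_photon_eigenvalue_bounds :
    (L0 - ((1 : ℂ) / 3) • B0).PosSemidef ∧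
    (((3 : ℂ) / 5) • B0 - L0).PosSemidef ∧
    (∃ u : Fin 2 → ℂ, u ≠ 0 ∧
      star u ⬝ᵥ L0.mulVec u = ((1 : ℂ) / 3) * (star u ⬝ᵥ B0.mulVec u)) ∧
    (∃ v : Fin 2 → ℂ, v ≠ 0 ∧
      star v ⬝ᵥ L0.mulVec v = ((3 : ℂ) / 5) * (star v ⬝ᵥ B0.mulVec v)) := by
  have hL0 : L0 - (3 / 5 : ℂ) • B0 = (-2 / 5 : ℂ) • P (φ 0) := by
    rw [← neg_sub, smul_B0_sub_L0, ← neg_smul, neg_div]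
  refine ⟨?_, ?_, ⟨φ 0, φ_zero_ne_zero, ?_⟩, ⟨φ 2, φ_two_ne_zero, ?_⟩⟩
  · rw [L0_sub_smul_B0]
    exact (posSemidef_vecMulVec_self_star _).smul (by positivity)
  · rw [smul_B0_sub_L0]
    exact (posSemidef_vecMulVec_self_star _).smul (by positivity)
  · exact star_dotProduct_mulVec_eq_of_sub_eq L0_sub_smul_B0 star_φ_two_dotProduct_φ_zero
  · exact star_dotProduct_mulVec_eq_of_sub_eq hL0 <| by
      rw [star_dotProduct, star_φ_two_dotProduct_φ_zero, star_zero]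

end
end

section
/- Let p_dark, e_detector, η₁ be real numbers with 0 < p_dark ≤ 1, 0 ≤ e_detector < 1/4, and 0 < η₁ ≤ 1. Define the BB84 single-photon yield Y₁ := [η₁ + (1 - η₁)·p_dark]/2 and bit error rate e₁ := [η₁·e_detector/2 + (1 - η₁)·p_dark/4] / Y₁ (note Y₁ > 0). Then e₁ = 1/4 if and only if η₁ = p_dark / (1 - 4·e_detector + p_dark). Hence the distance upper bounds for BB84 (threshold e₁ = 1/4) and for SARG04 (threshold e₁ = 1/3 with its yield Y₁ = η₁(e_detector/2 + 1/4) + (1 - η₁)p_dark/2) correspond to exactly the same transmission efficiency η₁. -/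
/-- For BB84 with realistic devices, the single-photon bit error rate reaches the
security threshold `e₁ = 1/4` exactly when `η₁ = p_dark / (1 - 4 e_detector + p_dark)`;
hence the BB84 threshold (`e₁ = 1/4`) and the SARG04 threshold (`e₁ = 1/3` with the
SARG04 yield) correspond to exactly the same transmission efficiency `η₁`. -/
theorem bb84_sarg04_same_threshold_efficiency
    (p_dark e_detector η₁ : ℝ)
    (hp0 : 0 < p_dark) (hp1 : p_dark ≤ 1)
    (he0 : 0 ≤ e_detector) (he1 : e_detector < 1 / 4)
    (hη0 : 0 < η₁) (hη1 : η₁ ≤ 1)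
    (Y₁BB84 : ℝ) (hYB : Y₁BB84 = (η₁ + (1 - η₁) * p_dark) / 2)
    (e₁BB84 : ℝ) (heB : e₁BB84 = (η₁ * e_detector / 2 + (1 - η₁) * p_dark / 4) / Y₁BB84)
    (Y₁SARG : ℝ) (hYS : Y₁SARG = η₁ * (e_detector / 2 + 1 / 4) + (1 - η₁) * p_dark / 2)
    (e₁SARG : ℝ) (heS : e₁SARG = (η₁ * e_detector / 2 + (1 - η₁) * p_dark / 4) / Y₁SARG) :
    (e₁BB84 = 1 / 4 ↔ η₁ = p_dark / (1 - 4 * e_detector + p_dark)) ∧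
      (e₁BB84 = 1 / 4 ↔ e₁SARG = 1 / 3) := by
  have hD : 0 < 1 - 4 * e_detector + p_dark := by linarith
  have hYBpos : (0:ℝ) < (η₁ + (1 - η₁) * p_dark) / 2 := by nlinarith
  have hYSpos : (0:ℝ) < η₁ * (e_detector / 2 + 1 / 4) + (1 - η₁) * p_dark / 2 := by nlinarith
  have key1 : e₁BB84 = 1 / 4 ↔ η₁ * (1 - 4 * e_detector + p_dark) = p_dark := by
    rw [heB, hYB, div_eq_div_iff hYBpos.ne' (by norm_num : (4:ℝ) ≠ 0)]
    constructor <;> intro h <;> ring_nf at h ⊢ <;> linarith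
  have key2 : e₁SARG = 1 / 3 ↔ η₁ * (1 - 4 * e_detector + p_dark) = p_dark := by
    rw [heS, hYS, div_eq_div_iff hYSpos.ne' (by norm_num : (3:ℝ) ≠ 0)]
    constructor <;> intro h <;> ring_nf at h ⊢ <;> linarith
  exact ⟨key1.trans (eq_div_iff hD.ne').symm, key1.trans key2.symm⟩
end
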